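/- arXiv:2301.02324 — 6 statements merged into one kernel-verified Lean document; each statement's English description precedes it below -/
import Mathlib

section
/- Let ι be an index type of agents and for each i : ι let S i and T i be strategy types. Let u : ι → (∀ i, S i) → ℝ and v : ι → (∀ i, T i) → ℝ be utility functions, and let F : ∀ i, S i → Set (T i) satisfy: (a) for every i and every t : T i there exists s : S i with t ∈ F i s; (b) F i s is nonempty for every i and s; and (c) for all profiles σ : ∀ i, S i and τ : ∀ i, T i, if τ i ∈ F i (σ i) for every i, then v k τ = u k σ for every agent k. Then a profile σ is a Nash equilibrium for u if and only if every profile τ with τ i ∈ F i (σ i) for all i is a Nash equilibrium for v. -/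
/-- A profile `σ` is a Nash equilibrium for the utility functions `u` if no agent can
strictly improve its own utility by a unilateral deviation. -/
def IsNashEquilibrium {ι : Type*} [DecidableEq ι] {S : ι → Type*}
    (u : ι → (∀ i, S i) → ℝ) (σ : ∀ i, S i) : Prop :=
  ∀ (i : ι) (s' : S i), u i (Function.update σ i s') ≤ u i σ

/-- A natural (payoff-preserving) correspondence between the strategies of two games
preserves Nash equilibria. -/
theorem nash_preserved_by_natural_mapping
    {ι : Type*} [DecidableEq ι] {S T : ι → Type*}
    (u : ι → (∀ i, S i) → ℝ) (v : ι → (∀ i, T i) → ℝ)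
    (F : ∀ i, S i → Set (T i))
    (ha : ∀ (i : ι) (t : T i), ∃ s : S i, t ∈ F i s)
    (hb : ∀ (i : ι) (s : S i), (F i s).Nonempty)
    (hc : ∀ (σ : ∀ i, S i) (τ : ∀ i, T i),
      (∀ i, τ i ∈ F i (σ i)) → ∀ k, v k τ = u k σ)
    (σ : ∀ i, S i) :
    IsNashEquilibrium u σ ↔
      ∀ τ : ∀ i, T i, (∀ i, τ i ∈ F i (σ i)) → IsNashEquilibrium v τ := by
  have hupd : ∀ (σ : ∀ i, S i) (τ : ∀ i, T i), (∀ i, τ i ∈ F i (σ i)) →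
      ∀ (i : ι) (s' : S i) (t' : T i), t' ∈ F i s' →
      ∀ j, Function.update τ i t' j ∈ F j (Function.update σ i s' j) := by
    intro σ τ hτ i s' t' ht' j
    by_cases h : j = i
    · subst h; simpa using ht'
    · simpa [Function.update_of_ne h] using hτ j
  constructor
  · intro hσ τ hτ i t'
    obtain ⟨s', hs'⟩ := ha i t'
    have h1 := hc (Function.update σ i s') (Function.update τ i t')
      (hupd σ τ hτ i s' t' hs') i
    have h2 := hc σ τ hτ i
    rw [h1, h2]
    exact hσ i s'
  · intro h i s'
    have hτex : ∀ j, ∃ t, t ∈ F j (σ j) := fun j => hb j (σ j)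
    choose τ hτ using hτex
    obtain ⟨t', ht'⟩ := hb i s'
    have hNE := h τ hτ i t'
    have h1 := hc (Function.update σ i s') (Function.update τ i t')
      (hupd σ τ hτ i s' t' ht') i
    have h2 := hc σ τ hτ i
    rw [← h1, ← h2]
    exact hNE
end

section
/- In any MAID graph, if agent k has perfect recall then agent k has sufficient recall; that is, if for all decision variables i, i' owned by k with i < i' one has Pa i ∪ {i} ⊆ Pa i', then the s-relevance relation restricted to agent k's decision variables admits no directed cycle. -/
section DSeparation

variable {V : Type*}

/-- `IsTrail E m f u v` says that `f 0, f 1, …, f m` is a trail from `u` to `v` in the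
digraph with edge relation `E`: it has length `m ≥ 1`, pairwise distinct vertices, and each
consecutive pair is joined by an edge in one direction or the other. -/
def IsTrail (E : V → V → Prop) (m : ℕ) (f : ℕ → V) (u v : V) : Prop :=
  1 ≤ m ∧ f 0 = u ∧ f m = v ∧
    (∀ l ≤ m, ∀ l' ≤ m, f l = f l' → l = l') ∧
    ∀ l < m, E (f l) (f (l + 1)) ∨ E (f (l + 1)) (f l)

/-- The vertex at position `l` of the trail `f` is a collider: both neighbouring edges
point into it. -/
def IsColliderAt (E : V → V → Prop) (f : ℕ → V) (l : ℕ) : Prop :=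
  E (f (l - 1)) (f l) ∧ E (f (l + 1)) (f l)

/-- A trail `f 0, …, f m` is blocked by the set `Z` if some intermediate vertex is either a
non-collider belonging to `Z`, or a collider that is neither in `Z` nor an ancestor of a
member of `Z`. -/
def IsBlocked (E : V → V → Prop) (Z : Set V) (m : ℕ) (f : ℕ → V) : Prop :=
  ∃ l, 0 < l ∧ l < m ∧
    ((¬ IsColliderAt E f l ∧ f l ∈ Z) ∨
      (IsColliderAt E f l ∧ f l ∉ Z ∧ ¬ ∃ z ∈ Z, Relation.TransGen E (f l) z))

/-- `u` is d-separated from `v` by `Z`: every trail from `u` to `v` is blocked by `Z`. -/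
def DSep (E : V → V → Prop) (Z : Set V) (u v : V) : Prop :=
  ∀ m f, IsTrail E m f u v → IsBlocked E Z m f

/-- The digraph obtained from `E` by adjoining one fresh vertex `none` whose only incident
edge is `none → some d`. -/
def extE (E : V → V → Prop) (d : V) : Option V → Option V → Prop := fun a b =>
  match a, b with
  | some j, some i => E j i
  | none, some i => i = d
  | _, none => False

end DSeparation

/-- The graph of a multi-agent influence diagram: variables `Fin n` with parent sets
respecting the ordering, decision variables with owners, and utility variables for each
agent, disjoint from the decisions. -/
structure MAIDGraph (n : ℕ) (Agent : Type) [Fintype Agent] where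
  Pa : Fin n → Finset (Fin n)
  pa_lt : ∀ i, ∀ j ∈ Pa i, j < i
  Dec : Finset (Fin n)
  owner : Fin n → Agent
  Ut : Agent → Finset (Fin n)
  ut_disj : ∀ k, ∀ i ∈ Ut k, i ∉ Dec

variable {n : ℕ} {Agent : Type} [Fintype Agent]

/-- The edge relation of the DAG induced by a MAID graph: `j → i` iff `j ∈ Pa i`. -/
def MAIDGraph.E (G : MAIDGraph n Agent) : Fin n → Fin n → Prop := fun j i => j ∈ G.Pa i

/-- `Π_D` is s-reachable from `Π_{D'}` (for `D` owned by agent `k`): in the DAG extended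
with a fresh mechanism vertex `π` whose only incident edge is `π → D'`, the vertex `π` is
NOT d-separated from `Ut k ∩ Desc(D)` by `{D} ∪ Pa(D)`. -/
def SReachable (G : MAIDGraph n Agent) (k : Agent) (D' D : Fin n) : Prop :=
  ¬ ∀ w : Fin n, w ∈ G.Ut k → Relation.TransGen G.E D w →
      DSep (extE G.E D') (Option.some '' (insert D ↑(G.Pa D))) none (some w)

/-- The s-relevance relation restricted to agent `k`'s decision variables:
`D'` is related to `D` iff both are decisions owned by `k` and `Π_D` is s-reachable
from `Π_{D'}`. -/
def SRelevant (G : MAIDGraph n Agent) (k : Agent) (D' D : Fin n) : Prop :=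
  D' ∈ G.Dec ∧ G.owner D' = k ∧ D ∈ G.Dec ∧ G.owner D = k ∧ SReachable G k D' D

/-- Agent `k` has sufficient recall: the s-relevance relation restricted to agent `k`'s
decision variables admits no directed cycle. -/
def SufficientRecall (G : MAIDGraph n Agent) (k : Agent) : Prop :=
  ¬ ∃ D : Fin n, Relation.TransGen (SRelevant G k) D D

/-- Agent `k` has perfect recall: each of its decisions observes every earlier decision of
hers together with all of its parents. -/
def PerfectRecall (G : MAIDGraph n Agent) (k : Agent) : Prop :=
  ∀ i i' : Fin n, i ∈ G.Dec → i' ∈ G.Dec → G.owner i = k → G.owner i' = k → i < i' →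
    insert i (G.Pa i) ⊆ G.Pa i'

/-! If `D' ≤ D` are decisions of an agent with perfect recall, then `D'` and all its parents
are observed at `D`. A trail from the mechanism `π → D'` must pass through `D'` or one of its
parents as a non-collider, so it is blocked by `{D} ∪ Pa D` before reaching any descendant
of `D`. Hence s-relevance only points from later to strictly earlier decisions and has no
cycle. -/

section DSeparation

variable {V : Type*}

/-- The trail is blocked at `d` if it leaves `d` forwards, and otherwise at the parent of `d`
it enters next, which `hasymm` keeps from being a collider. -/
theorem dSep_extE_of_parents_subset {E : V → V → Prop} {d w : V} {Z : Set V}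
    (hasymm : ∀ j, E j d → ¬ E d j) (hd : d ∈ Z) (hpa : ∀ j, E j d → j ∈ Z) (hw : w ∉ Z) :
    DSep (extE E d) (Option.some '' Z) none (some w) := by
  rintro m f ⟨hm, hf0, hfm, hinj, hedge⟩
  have hf1 : f 1 = some d := by
    have h01 := hedge 0 (by omega)
    rw [hf0] at h01
    rcases hf : f 1 with _ | j <;> simp_all [extE]
  have hm2 : 2 ≤ m := by
    by_contra! hm1
    obtain rfl : m = 1 := by omega
    exact hw (Option.some.inj (hf1.symm.trans hfm) ▸ hd)
  obtain ⟨j, hf2⟩ : ∃ j, f 2 = some j := by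
    rcases hf : f 2 with _ | j
    · exact absurd (hinj 2 hm2 0 (by omega) (by rw [hf, hf0])) (by omega)
    · exact ⟨j, rfl⟩
  by_cases hjd : E j d
  · have hm3 : 3 ≤ m := by
      by_contra! hm
      obtain rfl : m = 2 := by omega
      exact hw (Option.some.inj (hf2.symm.trans hfm) ▸ hpa j hjd)
    refine ⟨2, by omega, by omega, Or.inl ⟨fun hcol => hasymm j hjd ?_, j, hpa j hjd, hf2.symm⟩⟩
    simpa [hf1, hf2, extE] using hcol.1
  · refine ⟨1, by omega, by omega, Or.inl ⟨fun hcol => hjd ?_, d, hd, hf1.symm⟩⟩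
    simpa [hf1, hf2, extE] using hcol.2

end DSeparation

namespace MAIDGraph

variable (G : MAIDGraph n Agent)

theorem lt_of_transGen_E {a b : Fin n} (hab : Relation.TransGen G.E a b) : a < b := by
  induction hab with
  | single hab => exact G.pa_lt _ _ hab
  | tail _ hbc ih => exact ih.trans (G.pa_lt _ _ hbc)

variable {G} {k : Agent}

theorem insert_pa_subset_of_le (h : PerfectRecall G k) {D' D : Fin n}
    (hD' : D' ∈ G.Dec) (hD : D ∈ G.Dec) (hD'k : G.owner D' = k) (hDk : G.owner D = k)
    (hle : D' ≤ D) : insert D' (G.Pa D') ⊆ insert D (G.Pa D) := by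
  rcases hle.eq_or_lt with rfl | hlt
  · exact subset_rfl
  · exact (h D' D hD' hD hD'k hDk hlt).trans (Finset.subset_insert _ _)

theorem lt_of_sRelevant (h : PerfectRecall G k) {D' D : Fin n} (hr : SRelevant G k D' D) :
    D < D' := by
  obtain ⟨hD', hD'k, hD, hDk, hreach⟩ := hr
  by_contra! hle
  have hZ := insert_pa_subset_of_le h hD' hD hD'k hDk hle
  refine hreach fun w _ hDw => dSep_extE_of_parents_subset ?_ ?_ ?_ ?_
  · exact fun j hj hj' => (G.pa_lt _ _ hj).not_gt (G.pa_lt _ _ hj')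
  · exact_mod_cast hZ (Finset.mem_insert_self _ _)
  · exact fun j hj => by exact_mod_cast hZ (Finset.mem_insert_of_mem hj)
  · have hlt := G.lt_of_transGen_E hDw
    simp only [Set.mem_insert_iff, Finset.mem_coe, not_or]
    exact ⟨hlt.ne', fun hw => (G.pa_lt _ _ hw).not_gt hlt⟩

end MAIDGraph

/-- In any MAID graph, perfect recall implies sufficient recall. -/
theorem sufficientRecall_of_perfectRecall (G : MAIDGraph n Agent) (k : Agent)
    (h : PerfectRecall G k) : SufficientRecall G k := by
  rintro ⟨D, hD⟩
  exact lt_irrefl D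
    (Relation.transGen_minimal (r' := (· > ·)) (fun _ _ => MAIDGraph.lt_of_sRelevant h) _ _ hD)
end

section
/- Let D be a finite nonempty type equipped with the discrete (⊤) measurable structure and let C be a type. Write R := C → PMF D for the type of stochastic decision rules, let Ω := (R × C) → D carry the product measurable structure, and let P : Measure Ω be the product of probability measures (Measure.infinitePi) assigning to coordinate (π, c) the measure (π c).toMeasure. Define f : R → C → Ω → D by f π c ω = ω (π, c). Then: (i) f is injective; and (ii) for every π : R, c : C, and d : D, P {ω | ω (π, c) = d} = π c d (as extended nonnegative reals). -/
open MeasureTheory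

/-- The canonical structural representation of stochastic decision rules: let `D` be a
finite nonempty type with the discrete (`⊤`) measurable structure, `C` a type of decision
contexts, `R := C → PMF D` the type of stochastic decision rules, and `Ω := (R × C) → D`
with the product measurable structure.  Let `P` be the product of the probability measures
`(π c).toMeasure` over the coordinates `(π, c)` (characterised as the projective limit of
the finite products, which is the defining property of `Measure.infinitePi`).  Define
`f π c ω = ω (π, c)`.  Then `f` is injective, and for every `π`, `c`, `d` the measure of
`{ω | ω (π, c) = d}` is `π c d`. -/
theorem decision_rule_structural_representation (D : Type*) [Fintype D] [Nonempty D]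
    (C : Type*) :
    letI : MeasurableSpace D := ⊤
    (Function.Injective
      fun (π : C → PMF D) (c : C) (ω : ((C → PMF D) × C) → D) => ω (π, c)) ∧
    ∀ P : Measure (((C → PMF D) × C) → D),
      IsProjectiveLimit P
        (fun J : Finset ((C → PMF D) × C) =>
          Measure.pi fun j : J => ((j : (C → PMF D) × C).1 (j : (C → PMF D) × C).2).toMeasure) →
      ∀ (π : C → PMF D) (c : C) (d : D),
        P {ω : ((C → PMF D) × C) → D | ω (π, c) = d} = π c d := by
  classical
  letI : MeasurableSpace D := ⊤
  constructor
  · -- injectivity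
    intro π π' h
    by_cases hsub : ∀ d₀ d₁ : D, d₀ = d₁
    · -- D is a subsingleton, hence PMF D is a subsingleton
      funext c
      apply PMF.ext
      intro d
      have h1 : (π c) d = 1 := by
        have := (π c).tsum_coe
        rw [tsum_eq_single d (fun b hb => absurd (hsub b d) hb)] at this
        exact this
      have h2 : (π' c) d = 1 := by
        have := (π' c).tsum_coe
        rw [tsum_eq_single d (fun b hb => absurd (hsub b d) hb)] at this
        exact this
      rw [h1, h2]
    · push_neg at hsub
      obtain ⟨d₀, d₁, hd⟩ := hsub
      funext c
      have hc := congrFun h c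
      have hthis := congrFun hc (fun p => if p = (π, c) then d₀ else d₁)
      by_contra hne
      have hneq : ((π', c) : (C → PMF D) × C) ≠ (π, c) := fun hpe =>
        hne (congrFun (Prod.ext_iff.mp hpe).1 c).symm
      have key : d₀ = if ((π', c) : (C → PMF D) × C) = (π, c) then d₀ else d₁ := by
        simpa using hthis
      rw [if_neg hneq] at key
      exact hd key
  · intro P hP π c d
    have hmeas : MeasurableSet {g : ∀ j : ({(π, c)} : Finset ((C → PMF D) × C)), D |
        g ⟨(π, c), Finset.mem_singleton_self _⟩ = d} := by
      show MeasurableSet ((fun g : ∀ _ : ({(π, c)} : Finset ((C → PMF D) × C)), D =>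
        g ⟨(π, c), Finset.mem_singleton_self _⟩) ⁻¹' {d})
      exact measurable_pi_apply _ (show MeasurableSet ({d} : Set D) from trivial)
    have hcyl : {ω : ((C → PMF D) × C) → D | ω (π, c) = d}
        = cylinder ({(π, c)} : Finset ((C → PMF D) × C))
          {g | g ⟨(π, c), Finset.mem_singleton_self _⟩ = d} := by
      ext ω; simp [Finset.restrict]
    rw [hcyl, hP.measure_cylinder _ hmeas]
    have hset : {g : ∀ j : ({(π, c)} : Finset ((C → PMF D) × C)), D |
          g ⟨(π, c), Finset.mem_singleton_self _⟩ = d}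
        = Set.pi Set.univ (fun _ => ({d} : Set D)) := by
      ext g
      constructor
      · rintro hg j -
        have : j = ⟨(π, c), Finset.mem_singleton_self _⟩ :=
          Subtype.ext (Finset.mem_singleton.mp j.2)
        rw [this]; exact hg
      · intro hg; exact hg ⟨(π, c), Finset.mem_singleton_self _⟩ (Set.mem_univ _)
    rw [hset, Measure.pi_pi]
    rw [Finset.prod_eq_single (⟨(π, c), Finset.mem_singleton_self _⟩ :
        ({(π, c)} : Finset ((C → PMF D) × C)))
      (fun j _ hj => absurd (Subtype.ext (Finset.mem_singleton.mp j.2)) hj)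
      (fun h => absurd (Finset.mem_univ _) h)]
    exact PMF.toMeasure_apply_singleton _ _ trivial
end

section
/- Define U₁ : ℝ → ℝ → ℝ → ℝ by U₁ p q s = p*q*(2*s - 1) - 2*p*(1 - q) - 2*(1 - p)*q + (1 - p)*(1 - q)*(1 - 2*s). Then there is no triple (p, q, s) with p, q, s ∈ [0,1] such that both: (i) U₁ p' q' s ≤ U₁ p q s for all p', q' ∈ [0,1]; and (ii) U₁ p q s ≤ U₁ p q s' for all s' ∈ [0,1]. -/
/-- Agent 1's expected utility in the counterexample game, as a function of the
behavioural-policy parameters `p`, `q` (agent 1) and `s` (agent 2). -/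
def U₁ (p q s : ℝ) : ℝ :=
  p * q * (2 * s - 1) - 2 * p * (1 - q) - 2 * (1 - p) * q
    + (1 - p) * (1 - q) * (1 - 2 * s)

/-- There is no behavioural Nash equilibrium: no `(p, q, s) ∈ [0,1]³` such that `(p, q)`
maximises `U₁ (·) (·) s` over `[0,1]²` and `s` minimises `U₁ p q (·)` over `[0,1]`. -/
theorem no_behavioural_nash :
    ¬ ∃ p q s : ℝ, p ∈ Set.Icc (0 : ℝ) 1 ∧ q ∈ Set.Icc (0 : ℝ) 1 ∧ s ∈ Set.Icc (0 : ℝ) 1 ∧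
      (∀ p' ∈ Set.Icc (0 : ℝ) 1, ∀ q' ∈ Set.Icc (0 : ℝ) 1, U₁ p' q' s ≤ U₁ p q s) ∧
      (∀ s' ∈ Set.Icc (0 : ℝ) 1, U₁ p q s ≤ U₁ p q s') := by
  rintro ⟨p, q, s, hp, hq, hs, hmax, hmin⟩
  have h01 : (0:ℝ) ∈ Set.Icc (0:ℝ) 1 := by constructor <;> norm_num
  have h11 : (1:ℝ) ∈ Set.Icc (0:ℝ) 1 := by constructor <;> norm_num
  have h1 := hmax 0 h01 0 h01
  have h2 := hmax 1 h11 1 h11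
  have h3 := hmin 0 h01
  have h4 := hmin 1 h11
  simp only [U₁] at h1 h2 h3 h4
  obtain ⟨hp0, hp1⟩ := hp
  obtain ⟨hq0, hq1⟩ := hq
  nlinarith [mul_nonneg hp0 (sub_nonneg.2 hq1), mul_nonneg hq0 (sub_nonneg.2 hp1),
    mul_nonneg hp0 hq0, mul_nonneg (sub_nonneg.2 hp1) (sub_nonneg.2 hq1), sq_nonneg (p + q - 1)]
end

section
/- There do not exist real numbers p, q, r, s, each in [0,1], satisfying all eight equations: (1/2)*p*r = 1/4, (1/2)*p*(1-r) = 1/4, (1/2)*(1-p)*s = 0, (1/2)*(1-p)*(1-s) = 0, (1/2)*q*r = 0, (1/2)*q*(1-r) = 1/4, (1/2)*(1-q)*s = 0, and (1/2)*(1-q)*(1-s) = 1/4. -/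
/-- No behavioural policy parameters `p, q, r, s ∈ [0,1]` reproduce the outcome
distribution induced by the mixed policy: the eight outcome-probability equations are
jointly unsolvable. -/
theorem no_equivalent_behavioural_policy :
    ¬ ∃ p q r s : ℝ,
      p ∈ Set.Icc (0 : ℝ) 1 ∧ q ∈ Set.Icc (0 : ℝ) 1 ∧
      r ∈ Set.Icc (0 : ℝ) 1 ∧ s ∈ Set.Icc (0 : ℝ) 1 ∧
      (1 / 2) * p * r = 1 / 4 ∧
      (1 / 2) * p * (1 - r) = 1 / 4 ∧
      (1 / 2) * (1 - p) * s = 0 ∧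
      (1 / 2) * (1 - p) * (1 - s) = 0 ∧
      (1 / 2) * q * r = 0 ∧
      (1 / 2) * q * (1 - r) = 1 / 4 ∧
      (1 / 2) * (1 - q) * s = 0 ∧
      (1 / 2) * (1 - q) * (1 - s) = 1 / 4 := by
  rintro ⟨p, q, r, s, hp, hq, hr, hs, h1, h2, _, _, h5, h6, _, _⟩
  -- h1+h2: p = 1; then r = 1/2; h5 gives q*r = 0 so q = 0; h6 gives contradiction.
  nlinarith [h1, h2, h5, h6, hr.1, hr.2, hq.1, hq.2, mul_nonneg hq.1 hr.1]
end

section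
/- Consider the MAID graph with four variables indexed 0, 1, 2, 3 (call them X, A, B, U respectively), parent sets Pa(X) = ∅, Pa(A) = {X}, Pa(B) = {A}, Pa(U) = {A, B}, a single agent k, decision variables Dec = {A, B} both owned by k, and utility set Ut k = {U}. Then agent k has sufficient recall (the s-relevance relation on {A, B} admits no directed cycle; in particular Π_B is not s-reachable from Π_A) but agent k does not have perfect recall (since Pa(A) ∪ {A} = {X, A} ⊄ Pa(B) = {A}). -/
variable {n : ℕ} {Agent : Type} [Fintype Agent]

/-- The concrete MAID graph with variables X = 0, A = 1, B = 2, U = 3, parent sets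
`Pa X = ∅`, `Pa A = {X}`, `Pa B = {A}`, `Pa U = {A, B}`, one agent, decisions `{A, B}`,
and utility set `{U}`. -/
def G13 : MAIDGraph 4 Unit where
  Pa := ![∅, {0}, {1}, {1, 2}]
  pa_lt := by decide
  Dec := {1, 2}
  owner := fun _ => ()
  Ut := fun _ => {3}
  ut_disj := by decide

instance : DecidableRel G13.E := fun j i => inferInstanceAs (Decidable (j ∈ G13.Pa i))

lemma fin4_cases : ∀ x : Fin 4, x = 0 ∨ x = 1 ∨ x = 2 ∨ x = 3 := by decide

lemma dsep_from1 (S : Set (Fin 4)) (h1S : (1 : Fin 4) ∈ S) (w : Fin 4)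
    (hw1 : w ≠ 1) (hw0 : w ≠ 0) :
    DSep (extE G13.E 1) (Option.some '' S) none (some w) := by
  rintro m f ⟨hm, hf0, hfm, hinj, hedge⟩
  -- f 1 = some 1
  have he0 := hedge 0 hm
  rw [hf0] at he0
  have hf1 : f 1 = some 1 := by
    cases h : f 1 with
    | none => rw [h] at he0; simp [extE] at he0
    | some x =>
      rw [h] at he0
      simp only [extE] at he0
      rcases he0 with h' | h'
      · rw [h']
      · exact absurd h' (by simp)
  -- m ≥ 2
  have hm2 : 2 ≤ m := by
    rcases Nat.lt_or_ge m 2 with h | h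
    · exfalso
      have : m = 1 := by omega
      rw [this, hf1] at hfm
      exact hw1 (Option.some.inj hfm).symm
    · exact h
  -- f 2 = some x with edge between 1 and x
  have he1 := hedge 1 (by omega)
  rw [hf1] at he1
  have hf2 : ∃ x : Fin 4, f 2 = some x := by
    cases h : f 2 with
    | none =>
      exfalso
      have := hinj 0 (by omega) 2 (by omega) (by rw [hf0, h])
      omega
    | some x => exact ⟨x, rfl⟩
  obtain ⟨x, hx⟩ := hf2
  rw [hx] at he1
  simp only [extE] at he1
  have hex : G13.E 1 x ∨ G13.E x 1 := he1
  -- x ∈ {0, 2, 3}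
  rcases fin4_cases x with rfl | rfl | rfl | rfl
  · -- x = 0 : collider path, must continue back to 1, contradiction
    exfalso
    have hm3 : 3 ≤ m := by
      rcases Nat.lt_or_ge m 3 with h | h
      · exfalso
        have hm' : m = 2 := by omega
        rw [hm', hx] at hfm
        exact hw0 (Option.some.inj hfm).symm
      · exact h
    have he2 := hedge 2 (by omega)
    rw [hx] at he2
    have hf3 : f 3 = some 1 := by
      cases h : f 3 with
      | none => rw [h] at he2; simp [extE] at he2
      | some y =>
        rw [h] at he2
        simp only [extE] at he2
        have hy : G13.E 0 y ∨ G13.E y 0 := he2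
        have hy1 : y = 1 := by
          rcases fin4_cases y with rfl | rfl | rfl | rfl
          · exact absurd hy (by decide)
          · rfl
          · exact absurd hy (by decide)
          · exact absurd hy (by decide)
        rw [hy1]
    have := hinj 1 (by omega) 3 (by omega) (by rw [hf1, hf3])
    omega
  · -- x = 1 : impossible by distinctness
    exfalso
    have := hinj 1 (by omega) 2 (by omega) (by rw [hf1, hx])
    omega
  · -- x = 2 : blocked at l = 1, non-collider in Z
    refine ⟨1, by omega, by omega, Or.inl ⟨?_, ?_⟩⟩
    · rintro ⟨-, hc⟩
      rw [hx, hf1] at hc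
      exact (by decide : ¬ G13.E 2 1) hc
    · exact hf1 ▸ ⟨1, h1S, rfl⟩
  · -- x = 3 : blocked at l = 1, non-collider in Z
    refine ⟨1, by omega, by omega, Or.inl ⟨?_, ?_⟩⟩
    · rintro ⟨-, hc⟩
      rw [hx, hf1] at hc
      exact (by decide : ¬ G13.E 3 1) hc
    · exact hf1 ▸ ⟨1, h1S, rfl⟩

lemma notS12 : ¬ SReachable G13 () 1 2 := by
  rw [SReachable, not_not]
  intro w hw _
  have hw3 : w = 3 :=
    Finset.mem_singleton.mp (show w ∈ ({3} : Finset (Fin 4)) from hw)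
  subst hw3
  exact dsep_from1 _ (by
    simp only [Set.mem_insert_iff, Finset.mem_coe]
    right; decide) 3 (by decide) (by decide)

lemma notS11 : ¬ SReachable G13 () 1 1 := by
  rw [SReachable, not_not]
  intro w hw _
  have hw3 : w = 3 :=
    Finset.mem_singleton.mp (show w ∈ ({3} : Finset (Fin 4)) from hw)
  subst hw3
  exact dsep_from1 _ (Set.mem_insert _ _) 3 (by decide) (by decide)

lemma notS22 : ¬ SReachable G13 () 2 2 := by
  rw [SReachable, not_not]
  intro w hw _
  have hw3 : w = 3 :=
    Finset.mem_singleton.mp (show w ∈ ({3} : Finset (Fin 4)) from hw)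
  subst hw3
  rintro m f ⟨hm, hf0, hfm, hinj, hedge⟩
  have he0 := hedge 0 hm
  rw [hf0] at he0
  have hf1 : f 1 = some 2 := by
    cases h : f 1 with
    | none => rw [h] at he0; simp [extE] at he0
    | some x =>
      rw [h] at he0
      simp only [extE] at he0
      rcases he0 with h' | h'
      · rw [h']
      · exact absurd h' (by simp)
  have hm2 : 2 ≤ m := by
    rcases Nat.lt_or_ge m 2 with h | h
    · exfalso
      have : m = 1 := by omega
      rw [this, hf1] at hfm
      exact absurd (Option.some.inj hfm) (by decide)
    · exact h
  have he1 := hedge 1 (by omega)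
  rw [hf1] at he1
  have hf2 : ∃ x : Fin 4, f 2 = some x := by
    cases h : f 2 with
    | none =>
      exfalso
      have := hinj 0 (by omega) 2 (by omega) (by rw [hf0, h])
      omega
    | some x => exact ⟨x, rfl⟩
  obtain ⟨x, hx⟩ := hf2
  rw [hx] at he1
  simp only [extE] at he1
  have hex : G13.E 2 x ∨ G13.E x 2 := he1
  have h2Z : (2 : Fin 4) ∈ insert 2 (↑(G13.Pa 2) : Set (Fin 4)) := Set.mem_insert _ _
  have h1Z : (1 : Fin 4) ∈ insert 2 (↑(G13.Pa 2) : Set (Fin 4)) := by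
    apply Set.mem_insert_of_mem
    simp only [Finset.mem_coe]
    decide
  -- x ∈ {1, 3}
  rcases fin4_cases x with rfl | rfl | rfl | rfl
  · exact absurd hex (by decide)
  · -- x = 1 : collider at 1, but blocked at l = 2 (non-collider 1 ∈ Z)
    have hm3 : 3 ≤ m := by
      rcases Nat.lt_or_ge m 3 with h | h
      · exfalso
        have : m = 2 := by omega
        rw [this, hx] at hfm
        exact absurd (Option.some.inj hfm) (by decide)
      · exact h
    refine ⟨2, by omega, by omega, Or.inl ⟨?_, ?_⟩⟩
    · rintro ⟨hc, -⟩
      rw [show (2:ℕ) - 1 = 1 from rfl, hf1, hx] at hc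
      exact (by decide : ¬ G13.E 2 1) hc
    · exact hx ▸ ⟨1, h1Z, rfl⟩
  · exact absurd hex (by decide)
  · -- x = 3 : blocked at l = 1
    refine ⟨1, by omega, by omega, Or.inl ⟨?_, ?_⟩⟩
    · rintro ⟨-, hc⟩
      rw [hx, hf1] at hc
      exact (by decide : ¬ G13.E 3 2) hc
    · exact hf1 ▸ ⟨2, h2Z, rfl⟩

lemma srel_eq : ∀ a b : Fin 4, SRelevant G13 () a b → a = 2 ∧ b = 1 := by
  rintro a b ⟨ha, -, hb, -, hs⟩
  have ha' : a = 1 ∨ a = 2 := by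
    have := Finset.mem_insert.mp (show a ∈ ({1, 2} : Finset (Fin 4)) from ha)
    simpa using this
  have hb' : b = 1 ∨ b = 2 := by
    have := Finset.mem_insert.mp (show b ∈ ({1, 2} : Finset (Fin 4)) from hb)
    simpa using this
  rcases ha' with rfl | rfl <;> rcases hb' with rfl | rfl
  · exact absurd hs notS11
  · exact absurd hs notS12
  · exact ⟨rfl, rfl⟩
  · exact absurd hs notS22

/-- In `G13`, the agent has sufficient recall (in particular `Π_B` is not s-reachable
from `Π_A`), but does not have perfect recall. -/
theorem sufficient_not_perfect_recall :
    SufficientRecall G13 () ∧ ¬ SReachable G13 () 1 2 ∧ ¬ PerfectRecall G13 () := by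
  refine ⟨?_, notS12, ?_⟩
  · rintro ⟨D, hD⟩
    have key : ∀ a b : Fin 4, Relation.TransGen (SRelevant G13 ()) a b → a = 2 ∧ b = 1 := by
      intro a b h
      induction h with
      | single h => exact srel_eq _ _ h
      | tail _ h2 ih =>
        obtain ⟨rfl, rfl⟩ := ih
        exact absurd (srel_eq _ _ h2).1 (by decide)
    obtain ⟨rfl, h⟩ := key _ _ hD
    exact absurd h (by decide)
  · intro h
    have hsub := h 1 2 (by decide) (by decide) rfl rfl (by decide)
    have h0 : (0 : Fin 4) ∈ G13.Pa 2 := hsub (by decide)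
    exact absurd h0 (by decide)
end
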